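/- arXiv:1409.4279 — 2 statements merged into one kernel-verified Lean document; each statement's English description precedes it below -/
import Mathlib

section
/- Let Q ∈ ℝ^{n×m} have orthonormal columns (QᵀQ = Iₘ), let δ ∈ [0,1] satisfy the principal-angle bound for sparsity level s with δ² < 1/2, and let S ⊆ {1,…,n} with 1 ≤ |S| = k ≤ s. Then the k×k matrix M = I_k − I_Sᵀ Q Qᵀ I_S is invertible and satisfies ‖M⁻¹ x‖₂ ≤ (1 − δ²)⁻¹ ‖x‖₂ < 2 ‖x‖₂ for every x ∈ ℝᵏ. -/
open Matrix

/-- Euclidean (ℓ₂) norm of a finitely-indexed real vector. -/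
noncomputable def norm2 {ι : Type*} [Fintype ι] (v : ι → ℝ) : ℝ :=
  Real.sqrt (∑ i, v i ^ 2)

/-- A vector of `ℝⁿ` is `s`-sparse if it has at most `s` nonzero entries. -/
def Sparse {n : ℕ} (s : ℕ) (v : Fin n → ℝ) : Prop :=
  ∃ T : Finset (Fin n), T.card ≤ s ∧ ∀ i ∉ T, v i = 0

/-- `δ` satisfies the principal-angle bound for `Q` at sparsity level `s`:
`|⟨Qw, v⟩| ≤ δ ‖Qw‖₂ ‖v‖₂` for every `w` and every `s`-sparse `v`. -/
def PABound {n m : ℕ} (Q : Matrix (Fin n) (Fin m) ℝ) (s : ℕ) (δ : ℝ) : Prop :=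
  ∀ (w : Fin m → ℝ) (v : Fin n → ℝ), Sparse s v →
    |Q.mulVec w ⬝ᵥ v| ≤ δ * norm2 (Q.mulVec w) * norm2 v

/-- The `n × |S|` matrix `I_S` whose columns are the standard basis vectors `e_j`, `j ∈ S`. -/
def colSel {n : ℕ} (S : Finset (Fin n)) : Matrix (Fin n) {i // i ∈ S} ℝ :=
  Matrix.of fun i j => if i = (j : Fin n) then 1 else 0

/-- `F_S(a) = I_S I_Sᵀ a`: the vector agreeing with `a` on `S` and zero elsewhere. -/
def restrictVec {n : ℕ} (S : Finset (Fin n)) (a : Fin n → ℝ) : Fin n → ℝ :=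
  fun i => if i ∈ S then a i else 0

/-!
Write `v = I_S y`, so that `‖v‖ = ‖y‖` and `v` is `s`-sparse, and `w = Qᵀ v`. Since `QᵀQ = I`,
both `⟨Qw, v⟩` and `‖Qw‖²` equal `‖w‖²`, so the principal-angle bound reads
`‖w‖² ≤ δ ‖w‖ ‖v‖`, i.e. `‖w‖² ≤ δ² ‖y‖²`. Hence `⟨M y, y⟩ = ‖y‖² − ‖w‖² ≥ (1 − δ²) ‖y‖²`:
the matrix `M` is coercive, so by Cauchy–Schwarz `‖M y‖ ≥ (1 − δ²) ‖y‖`, which gives both its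
invertibility and the bound on `M⁻¹`.
-/

section norm2

variable {ι : Type*} [Fintype ι]

lemma norm2_nonneg (v : ι → ℝ) : 0 ≤ norm2 v :=
  Real.sqrt_nonneg _

lemma norm2_zero : norm2 (0 : ι → ℝ) = 0 := by
  simp [norm2]

lemma norm2_eq_sqrt_dotProduct_self (v : ι → ℝ) : norm2 v = Real.sqrt (v ⬝ᵥ v) := by
  simp only [norm2, dotProduct, sq]

lemma norm2_sq (v : ι → ℝ) : norm2 v ^ 2 = v ⬝ᵥ v := by
  rw [norm2_eq_sqrt_dotProduct_self]
  exact Real.sq_sqrt (Finset.sum_nonneg fun i _ => mul_self_nonneg (v i))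

lemma eq_zero_of_norm2_eq_zero {v : ι → ℝ} (h : norm2 v = 0) : v = 0 := by
  rw [← dotProduct_self_eq_zero, ← norm2_sq, h, sq, zero_mul]

lemma dotProduct_le_norm2_mul_norm2 (x y : ι → ℝ) : x ⬝ᵥ y ≤ norm2 x * norm2 y :=
  Real.sum_mul_le_sqrt_mul_sqrt Finset.univ x y

end norm2

section coercive

variable {ι : Type*} [Fintype ι] {M : Matrix ι ι ℝ} {c : ℝ}

lemma mul_norm2_le_norm2_mulVec_of_coercive (hc : ∀ y, c * (y ⬝ᵥ y) ≤ M *ᵥ y ⬝ᵥ y)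
    (y : ι → ℝ) : c * norm2 y ≤ norm2 (M *ᵥ y) := by
  rcases (norm2_nonneg y).eq_or_lt with hy | hy
  · rw [← hy, mul_zero]
    exact norm2_nonneg _
  · refine le_of_mul_le_mul_right ?_ hy
    calc c * norm2 y * norm2 y = c * (y ⬝ᵥ y) := by rw [← norm2_sq]; ring
      _ ≤ M *ᵥ y ⬝ᵥ y := hc y
      _ ≤ norm2 (M *ᵥ y) * norm2 y := dotProduct_le_norm2_mul_norm2 _ _

lemma isUnit_of_coercive [DecidableEq ι] (hc0 : 0 < c)
    (hc : ∀ y, c * (y ⬝ᵥ y) ≤ M *ᵥ y ⬝ᵥ y) : IsUnit M := by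
  rw [← mulVec_injective_iff_isUnit]
  intro a b hab
  have hle := mul_norm2_le_norm2_mulVec_of_coercive hc (a - b)
  rw [mulVec_sub, hab, sub_self, norm2_zero] at hle
  exact sub_eq_zero.mp <| eq_zero_of_norm2_eq_zero <|
    (nonpos_of_mul_nonpos_right hle hc0).antisymm (norm2_nonneg _)

lemma norm2_inv_mulVec_le_of_coercive [DecidableEq ι] (hc0 : 0 < c)
    (hc : ∀ y, c * (y ⬝ᵥ y) ≤ M *ᵥ y ⬝ᵥ y) (x : ι → ℝ) : norm2 (M⁻¹ *ᵥ x) ≤ c⁻¹ * norm2 x := by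
  have hdet : IsUnit M.det := (isUnit_iff_isUnit_det M).mp (isUnit_of_coercive hc0 hc)
  have hle := mul_norm2_le_norm2_mulVec_of_coercive hc (M⁻¹ *ᵥ x)
  rw [mulVec_mulVec, mul_nonsing_inv M hdet, one_mulVec] at hle
  rwa [le_inv_mul_iff₀ hc0]

end coercive

section colSel

variable {n : ℕ} (S : Finset (Fin n)) (y : {i // i ∈ S} → ℝ)

lemma colSel_mulVec_apply (i : Fin n) :
    (colSel S *ᵥ y) i = if h : i ∈ S then y ⟨i, h⟩ else 0 := by
  simp only [mulVec, dotProduct, colSel, of_apply, ite_mul, one_mul, zero_mul]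
  split_ifs with h
  · rw [Finset.sum_eq_single ⟨i, h⟩ (fun j _ hj => if_neg fun hij => hj (Subtype.ext hij.symm))
      (fun h' => absurd (Finset.mem_univ _) h'), if_pos rfl]
  · exact Finset.sum_eq_zero fun j _ => if_neg fun (hij : i = j) => h (hij ▸ j.2)

lemma sparse_colSel_mulVec {s : ℕ} (hcard : S.card ≤ s) : Sparse s (colSel S *ᵥ y) :=
  ⟨S, hcard, fun i hi => by rw [colSel_mulVec_apply, dif_neg hi]⟩

lemma colSel_mulVec_dotProduct_self : colSel S *ᵥ y ⬝ᵥ colSel S *ᵥ y = y ⬝ᵥ y := by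
  unfold dotProduct
  rw [← Finset.sum_subset (Finset.subset_univ S)
      fun i _ hi => by rw [colSel_mulVec_apply, dif_neg hi, mul_zero],
    ← Finset.sum_attach S]
  refine Finset.sum_congr rfl fun j _ => ?_
  rw [colSel_mulVec_apply, dif_pos j.2]

end colSel

section principalAngle

variable {n m s : ℕ} {Q : Matrix (Fin n) (Fin m) ℝ} {δ : ℝ}

lemma PABound.transpose_mulVec_dotProduct_self_le (hQ : Qᵀ * Q = 1) (hPA : PABound Q s δ)
    {v : Fin n → ℝ} (hv : Sparse s v) : Qᵀ *ᵥ v ⬝ᵥ Qᵀ *ᵥ v ≤ δ ^ 2 * (v ⬝ᵥ v) := by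
  set w := Qᵀ *ᵥ v
  have hinner : Q *ᵥ w ⬝ᵥ v = w ⬝ᵥ w := by
    rw [dotProduct_comm, ← dotProduct_transpose_mulVec]
  have hnorm : norm2 (Q *ᵥ w) = norm2 w := by
    rw [norm2_eq_sqrt_dotProduct_self, norm2_eq_sqrt_dotProduct_self, dotProduct_comm,
      dotProduct_mulVec, ← mulVec_transpose, mulVec_mulVec, hQ, one_mulVec]
  have hbound := hPA w v hv
  rw [hinner, ← norm2_sq w, abs_of_nonneg (sq_nonneg _), hnorm] at hbound
  rw [← norm2_sq w, ← norm2_sq v]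
  rcases (norm2_nonneg w).eq_or_lt with hw | hw
  · rw [← hw, zero_pow two_ne_zero, ← mul_pow]
    exact sq_nonneg _
  · have : norm2 w ≤ δ * norm2 v := le_of_mul_le_mul_right (by nlinarith) hw
    nlinarith

lemma one_sub_transpose_mul_mulVec_dotProduct {κ : Type*} [Fintype κ] [DecidableEq κ]
    (A : Matrix (Fin n) κ ℝ) (y : κ → ℝ) :
    (1 - Aᵀ * Q * Qᵀ * A) *ᵥ y ⬝ᵥ y = y ⬝ᵥ y - Qᵀ *ᵥ (A *ᵥ y) ⬝ᵥ Qᵀ *ᵥ (A *ᵥ y) := by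
  rw [sub_mulVec, sub_dotProduct, one_mulVec, ← mulVec_mulVec, ← mulVec_mulVec,
    ← mulVec_mulVec]
  congr 1
  rw [dotProduct_comm, dotProduct_transpose_mulVec, dotProduct_comm, dotProduct_transpose_mulVec]

lemma coercive_one_sub_colSel (hQ : Qᵀ * Q = 1) (hPA : PABound Q s δ) {S : Finset (Fin n)}
    (hcard : S.card ≤ s) (y : {i // i ∈ S} → ℝ) :
    (1 - δ ^ 2) * (y ⬝ᵥ y) ≤ (1 - (colSel S)ᵀ * Q * Qᵀ * colSel S) *ᵥ y ⬝ᵥ y := by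
  have hw := hPA.transpose_mulVec_dotProduct_self_le hQ (sparse_colSel_mulVec S y hcard)
  rw [colSel_mulVec_dotProduct_self] at hw
  rw [one_sub_transpose_mul_mulVec_dotProduct]
  linarith

end principalAngle

theorem stmt6_general {n m s : ℕ} (Q : Matrix (Fin n) (Fin m) ℝ) (hQ : Qᵀ * Q = 1)
    (δ : ℝ) (hPA : PABound Q s δ) (hδ2 : δ ^ 2 < 1 / 2)
    (S : Finset (Fin n)) (hcard : S.card ≤ s)
    (M : Matrix {i // i ∈ S} {i // i ∈ S} ℝ)
    (hM : M = 1 - (colSel S)ᵀ * Q * Qᵀ * colSel S) :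
    IsUnit M ∧
      (∀ x : {i // i ∈ S} → ℝ, norm2 ((M⁻¹).mulVec x) ≤ (1 - δ ^ 2)⁻¹ * norm2 x) ∧
      (1 - δ ^ 2)⁻¹ < 2 := by
  have hc0 : 0 < 1 - δ ^ 2 := by linarith
  have hc := hM ▸ coercive_one_sub_colSel hQ hPA hcard
  refine ⟨isUnit_of_coercive hc0 hc, norm2_inv_mulVec_le_of_coercive hc0 hc, ?_⟩
  rw [inv_lt_iff_one_lt_mul₀ hc0]
  linarith

/-- If `δ² < 1/2`, the matrix `M = I_k − I_Sᵀ Q Qᵀ I_S` is invertible, with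
`‖M⁻¹ x‖₂ ≤ (1 − δ²)⁻¹ ‖x‖₂` for every `x`, and `(1 − δ²)⁻¹ < 2`. -/
theorem stmt6 {n m s : ℕ} (Q : Matrix (Fin n) (Fin m) ℝ) (hQ : Qᵀ * Q = 1)
    (δ : ℝ) (hδ0 : 0 ≤ δ) (hδ1 : δ ≤ 1) (hPA : PABound Q s δ) (hδ2 : δ ^ 2 < 1 / 2)
    (S : Finset (Fin n)) (hSne : S.Nonempty) (hcard : S.card ≤ s)
    (M : Matrix {i // i ∈ S} {i // i ∈ S} ℝ)
    (hM : M = 1 - (colSel S)ᵀ * Q * Qᵀ * colSel S) :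
    IsUnit M ∧
      (∀ x : {i // i ∈ S} → ℝ, norm2 ((M⁻¹).mulVec x) ≤ (1 - δ ^ 2)⁻¹ * norm2 x) ∧
      (1 - δ ^ 2)⁻¹ < 2 :=
  stmt6_general Q hQ δ hPA hδ2 S hcard M hM
end

section
/- Residual formula at the k-th GARD step with inlier noise: let Q ∈ ℝ^{n×m} have orthonormal columns (QᵀQ = Iₘ), y = Qw₀ + u₀ + η with supp(u₀) = S, and let S_k ⊆ S be a set of k ≥ 1 indices such that M_k = I_k − I_{S_k}ᵀ Q Qᵀ I_{S_k} is invertible. Then Φ_k = [Q I_{S_k}] has full column rank, and for the (unique) minimizer z* of ‖y − Φ_k z‖₂ the residual satisfies y − Φ_k z* = v_k + η_k − QQᵀ v_k − QQᵀ η_k, where v_k = F_{S∖S_k}(u₀) + I_{S_k} M_k⁻¹ I_{S_k}ᵀ Q Qᵀ F_{S∖S_k}(u₀) and η_k = F_{J∖S_k}(η) + I_{S_k} M_k⁻¹ I_{S_k}ᵀ Q Qᵀ F_{J∖S_k}(η) with J = {1,…,n}. -/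
/-!
The residual `r = v - QQᵀv`, with `v = g + I_{S_k} M_k⁻¹ I_{S_k}ᵀ QQᵀ g` and
`g = F_{S∖S_k}(u₀) + F_{J∖S_k}(η)`, is orthogonal to the columns of `Φ_k = [Q I_{S_k}]`, and
`y - r` lies in the column space of `Φ_k`, since the parts of `u₀ + η` on `S_k` are absorbed by the
`I_{S_k}` block. By Pythagoras every least-squares minimizer then has residual `r`. Full column
rank of `Φ_k` holds because eliminating the `Q` block of `Φ_k z = 0` leaves `M_k` applied to the
`I_{S_k}` block.
-/

open Matrix

lemma restrictVec_sdiff_add_restrictVec {n : ℕ} {S : Finset (Fin n)} (T : Finset (Fin n))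
    {a : Fin n → ℝ} (ha : ∀ i ∉ S, a i = 0) : restrictVec (S \ T) a + restrictVec T a = a := by
  funext i
  by_cases hT : i ∈ T <;> by_cases hS : i ∈ S <;> simp [restrictVec, hT, hS, ha i]

section ColSel

variable {n : ℕ} (S : Finset (Fin n))

lemma colSel_transpose_mulVec (x : Fin n → ℝ) : (colSel S)ᵀ *ᵥ x = fun j : S => x j := by
  funext j
  simp [mulVec, dotProduct, colSel, ite_mul]

lemma colSel_transpose_mul_colSel : (colSel S)ᵀ * colSel S = 1 := by
  ext j k
  simp only [mul_apply, colSel, transpose_apply, of_apply, ite_mul, one_mul, zero_mul,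
    Finset.sum_ite_eq', Finset.mem_univ, if_true, one_apply, Subtype.val_inj]

lemma colSel_mulVec_transpose_mulVec (x : Fin n → ℝ) :
    colSel S *ᵥ ((colSel S)ᵀ *ᵥ x) = restrictVec S x := by
  funext i
  rw [colSel_transpose_mulVec]
  simp only [mulVec, dotProduct, colSel, of_apply, ite_mul, one_mul,
    zero_mul, restrictVec]
  exact (Finset.sum_coe_sort S fun j => if i = j then x j else 0).trans (Finset.sum_ite_eq _ _ _)

lemma colSel_transpose_mulVec_restrictVec_sdiff (T : Finset (Fin n)) (a : Fin n → ℝ) :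
    (colSel S)ᵀ *ᵥ restrictVec (T \ S) a = 0 := by
  funext j
  simp [colSel_transpose_mulVec, restrictVec, j.2]

end ColSel

lemma norm2_eq_sqrt_dotProduct {ι : Type*} [Fintype ι] (v : ι → ℝ) : norm2 v = √(v ⬝ᵥ v) := by
  simp only [norm2, dotProduct, sq]

/-- Pythagoras: `‖y - Φ z‖² = ‖r‖² + ‖Φ (z₀ - z)‖²`. -/
theorem sub_mulVec_eq_of_transpose_mulVec_eq_zero {N K : Type*} [Fintype N] [Fintype K]
    (Φ : Matrix N K ℝ) {y r : N → ℝ} {z₀ z : K → ℝ} (hz₀ : y - Φ *ᵥ z₀ = r)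
    (horth : Φᵀ *ᵥ r = 0) (hmin : norm2 (y - Φ *ᵥ z) ≤ norm2 (y - Φ *ᵥ z₀)) :
    y - Φ *ᵥ z = r := by
  set e := Φ *ᵥ (z₀ - z)
  have hsplit : y - Φ *ᵥ z = r + e := by
    rw [← hz₀]; simp only [e, mulVec_sub]; abel
  have hre : r ⬝ᵥ e = 0 := by
    rw [dotProduct_mulVec, ← mulVec_transpose, horth, zero_dotProduct]
  have hpyth : (r + e) ⬝ᵥ (r + e) = r ⬝ᵥ r + e ⬝ᵥ e := by
    rw [add_dotProduct, dotProduct_add, dotProduct_add, dotProduct_comm e r, hre]; ring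
  have hr : 0 ≤ r ⬝ᵥ r := Finset.sum_nonneg fun i _ => mul_self_nonneg (r i)
  have he : 0 ≤ e ⬝ᵥ e := Finset.sum_nonneg fun i _ => mul_self_nonneg (e i)
  rw [hsplit, hz₀, norm2_eq_sqrt_dotProduct, norm2_eq_sqrt_dotProduct, hpyth,
    Real.sqrt_le_sqrt_iff hr] at hmin
  rw [hsplit, dotProduct_self_eq_zero.mp (by linarith : e ⬝ᵥ e = 0), add_zero]

section Orthonormal

variable {N K L : Type*} [Fintype N] [Fintype K] [Fintype L] [DecidableEq L]
  {Q : Matrix N K ℝ} {A : Matrix N L ℝ}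

lemma one_sub_mul_mulVec (c : L → ℝ) :
    (1 - Aᵀ * Q * Qᵀ * A) *ᵥ c = c - Aᵀ *ᵥ (Q *ᵥ (Qᵀ *ᵥ (A *ᵥ c))) := by
  simp only [sub_mulVec, one_mulVec, mulVec_mulVec, Matrix.mul_assoc]

variable [DecidableEq K]

lemma transpose_mulVec_mulVec_of_transpose_mul_self (hQ : Qᵀ * Q = 1) (x : K → ℝ) :
    Qᵀ *ᵥ (Q *ᵥ x) = x := by
  rw [mulVec_mulVec, hQ, one_mulVec]

theorem fromCols_mulVec_injective (hQ : Qᵀ * Q = 1) (hA : Aᵀ * A = 1)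
    (hM : IsUnit (1 - Aᵀ * Q * Qᵀ * A)) : Function.Injective (fromCols Q A).mulVec := by
  intro a b hab
  obtain ⟨x, c, hxc⟩ : ∃ x c, a - b = Sum.elim x c := ⟨_, _, (Sum.elim_comp_inl_inr _).symm⟩
  have h0 : Q *ᵥ x + A *ᵥ c = 0 := by
    rw [← fromCols_mulVec_sumElim, ← hxc, mulVec_sub, hab, sub_self]
  have hx : x = -(Qᵀ *ᵥ (A *ᵥ c)) := by
    have := congrArg (Qᵀ *ᵥ ·) h0
    simp only [mulVec_add, transpose_mulVec_mulVec_of_transpose_mul_self hQ, mulVec_zero] at this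
    exact eq_neg_of_add_eq_zero_left this
  have hMc : (1 - Aᵀ * Q * Qᵀ * A) *ᵥ c = 0 := by
    have := congrArg (Aᵀ *ᵥ ·) h0
    simp only [mulVec_add, transpose_mulVec_mulVec_of_transpose_mul_self hA, mulVec_zero, hx,
      mulVec_neg] at this
    rw [one_sub_mul_mulVec, ← this]; abel
  have hc : c = 0 := (mulVec_injective_iff_isUnit.mpr hM) (hMc.trans (mulVec_zero _).symm)
  rw [← sub_eq_zero, hxc, hx, hc, mulVec_zero, mulVec_zero, neg_zero]
  exact Sum.elim_zero_zero

/-- The correction `c = M⁻¹ AᵀQQᵀ g` is chosen exactly so that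
`Aᵀ(v - QQᵀv) = M c - AᵀQQᵀ g = 0`. -/
theorem fromCols_transpose_mulVec_residual_eq_zero (hQ : Qᵀ * Q = 1) (hA : Aᵀ * A = 1)
    (hM : IsUnit (1 - Aᵀ * Q * Qᵀ * A)) {g : N → ℝ} (hg : Aᵀ *ᵥ g = 0) :
    let v := g + A *ᵥ ((1 - Aᵀ * Q * Qᵀ * A)⁻¹ *ᵥ (Aᵀ *ᵥ (Q *ᵥ (Qᵀ *ᵥ g))))
    (fromCols Q A)ᵀ *ᵥ (v - Q *ᵥ (Qᵀ *ᵥ v)) = 0 := by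
  intro v
  set M := 1 - Aᵀ * Q * Qᵀ * A
  set c := M⁻¹ *ᵥ (Aᵀ *ᵥ (Q *ᵥ (Qᵀ *ᵥ g)))
  have hMc : M *ᵥ c = Aᵀ *ᵥ (Q *ᵥ (Qᵀ *ᵥ g)) := by
    rw [mulVec_mulVec, mul_nonsing_inv M ((isUnit_iff_isUnit_det M).mp hM), one_mulVec]
  have hQr : Qᵀ *ᵥ (v - Q *ᵥ (Qᵀ *ᵥ v)) = 0 := by
    rw [mulVec_sub, transpose_mulVec_mulVec_of_transpose_mul_self hQ, sub_self]
  have hAr : Aᵀ *ᵥ (v - Q *ᵥ (Qᵀ *ᵥ v)) = 0 := by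
    have hcM : M *ᵥ c = c - Aᵀ *ᵥ (Q *ᵥ (Qᵀ *ᵥ (A *ᵥ c))) := one_sub_mul_mulVec c
    rw [hMc] at hcM
    rw [show v = g + A *ᵥ c from rfl]
    simp only [mulVec_sub, mulVec_add, hg, transpose_mulVec_mulVec_of_transpose_mul_self hA, hcM]
    abel
  rw [transpose_fromCols, fromRows_mulVec, hQr, hAr, Sum.elim_zero_zero]

theorem sub_fromCols_mulVec_eq_of_norm2_le (hQ : Qᵀ * Q = 1) (hA : Aᵀ * A = 1)
    (hM : IsUnit (1 - Aᵀ * Q * Qᵀ * A)) {g : N → ℝ} (hg : Aᵀ *ᵥ g = 0) (w : K → ℝ) (d : L → ℝ)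
    {z : K ⊕ L → ℝ}
    (hmin : ∀ z', norm2 (Q *ᵥ w + g + A *ᵥ d - fromCols Q A *ᵥ z) ≤
      norm2 (Q *ᵥ w + g + A *ᵥ d - fromCols Q A *ᵥ z')) :
    let v := g + A *ᵥ ((1 - Aᵀ * Q * Qᵀ * A)⁻¹ *ᵥ (Aᵀ *ᵥ (Q *ᵥ (Qᵀ *ᵥ g))))
    Q *ᵥ w + g + A *ᵥ d - fromCols Q A *ᵥ z = v - Q *ᵥ (Qᵀ *ᵥ v) := by
  intro v
  set c := (1 - Aᵀ * Q * Qᵀ * A)⁻¹ *ᵥ (Aᵀ *ᵥ (Q *ᵥ (Qᵀ *ᵥ g)))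
  refine sub_mulVec_eq_of_transpose_mulVec_eq_zero _ (z₀ := Sum.elim (w + Qᵀ *ᵥ v) (d - c)) ?_
    (fromCols_transpose_mulVec_residual_eq_zero hQ hA hM hg) (hmin _)
  rw [fromCols_mulVec_sumElim, mulVec_add, mulVec_sub, show v = g + A *ᵥ c from rfl]
  abel

end Orthonormal

theorem stmt17_general {n m : ℕ} (Q : Matrix (Fin n) (Fin m) ℝ) (hQ : Qᵀ * Q = 1)
    (w₀ : Fin m → ℝ) (u₀ η : Fin n → ℝ) (S : Finset (Fin n))
    (hsupp : ∀ i, i ∈ S ↔ u₀ i ≠ 0)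
    (y : Fin n → ℝ) (hy : y = Q.mulVec w₀ + u₀ + η)
    (Sk : Finset (Fin n))
    (Mk : Matrix {i // i ∈ Sk} {i // i ∈ Sk} ℝ)
    (hMk : Mk = 1 - (colSel Sk)ᵀ * Q * Qᵀ * colSel Sk) (hMkInv : IsUnit Mk)
    (Φk : Matrix (Fin n) (Fin m ⊕ {i // i ∈ Sk}) ℝ)
    (hΦk : Φk = Matrix.fromCols Q (colSel Sk))
    (vk : Fin n → ℝ)
    (hvk : vk = restrictVec (S \ Sk) u₀ +
      (colSel Sk).mulVec ((Mk⁻¹).mulVec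
        ((colSel Sk)ᵀ.mulVec (Q.mulVec (Qᵀ.mulVec (restrictVec (S \ Sk) u₀))))))
    (ηk : Fin n → ℝ)
    (hηk : ηk = restrictVec (Finset.univ \ Sk) η +
      (colSel Sk).mulVec ((Mk⁻¹).mulVec
        ((colSel Sk)ᵀ.mulVec (Q.mulVec (Qᵀ.mulVec (restrictVec (Finset.univ \ Sk) η)))))) :
    Function.Injective Φk.mulVec ∧
      ∀ zstar : Fin m ⊕ {i // i ∈ Sk} → ℝ,
        (∀ z, norm2 (y - Φk.mulVec zstar) ≤ norm2 (y - Φk.mulVec z)) →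
          y - Φk.mulVec zstar =
            vk + ηk - Q.mulVec (Qᵀ.mulVec vk) - Q.mulVec (Qᵀ.mulVec ηk) := by
  subst hMk hΦk hvk hηk hy
  have hA := colSel_transpose_mul_colSel Sk
  refine ⟨fromCols_mulVec_injective hQ hA hMkInv, fun z hmin => ?_⟩
  set g := restrictVec (S \ Sk) u₀ + restrictVec (Finset.univ \ Sk) η
  have hg : (colSel Sk)ᵀ *ᵥ g = 0 := by
    rw [mulVec_add, colSel_transpose_mulVec_restrictVec_sdiff,
      colSel_transpose_mulVec_restrictVec_sdiff, add_zero]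
  have hu₀ : ∀ i ∉ S, u₀ i = 0 := fun i hi => not_not.mp (mt (hsupp i).mpr hi)
  have hy : Q *ᵥ w₀ + u₀ + η = Q *ᵥ w₀ + g + colSel Sk *ᵥ ((colSel Sk)ᵀ *ᵥ (u₀ + η)) := by
    simp only [g, mulVec_add, colSel_mulVec_transpose_mulVec]
    conv_lhs => rw [← restrictVec_sdiff_add_restrictVec Sk hu₀,
      ← restrictVec_sdiff_add_restrictVec (S := Finset.univ) Sk (a := η) (by simp)]
    abel
  rw [hy] at hmin ⊢
  rw [sub_fromCols_mulVec_eq_of_norm2_le hQ hA hMkInv hg _ _ hmin]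
  simp only [g, mulVec_add]
  abel

/-- Residual formula at the `k`-th GARD step with inlier noise: for `S_k ⊆ S` nonempty with
`M_k` invertible, `Φ_k = [Q I_{S_k}]` has full column rank and the least-squares residual
equals `v_k + η_k − QQᵀ v_k − QQᵀ η_k`, where `v_k` and `η_k` are the modified outlier and
inlier-noise vectors. -/
theorem stmt17 {n m : ℕ} (Q : Matrix (Fin n) (Fin m) ℝ) (hQ : Qᵀ * Q = 1)
    (w₀ : Fin m → ℝ) (u₀ η : Fin n → ℝ) (S : Finset (Fin n))
    (hsupp : ∀ i, i ∈ S ↔ u₀ i ≠ 0)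
    (y : Fin n → ℝ) (hy : y = Q.mulVec w₀ + u₀ + η)
    (Sk : Finset (Fin n)) (hSkS : Sk ⊆ S) (hSkne : Sk.Nonempty)
    (Mk : Matrix {i // i ∈ Sk} {i // i ∈ Sk} ℝ)
    (hMk : Mk = 1 - (colSel Sk)ᵀ * Q * Qᵀ * colSel Sk) (hMkInv : IsUnit Mk)
    (Φk : Matrix (Fin n) (Fin m ⊕ {i // i ∈ Sk}) ℝ)
    (hΦk : Φk = Matrix.fromCols Q (colSel Sk))
    (vk : Fin n → ℝ)
    (hvk : vk = restrictVec (S \ Sk) u₀ +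
      (colSel Sk).mulVec ((Mk⁻¹).mulVec
        ((colSel Sk)ᵀ.mulVec (Q.mulVec (Qᵀ.mulVec (restrictVec (S \ Sk) u₀))))))
    (ηk : Fin n → ℝ)
    (hηk : ηk = restrictVec (Finset.univ \ Sk) η +
      (colSel Sk).mulVec ((Mk⁻¹).mulVec
        ((colSel Sk)ᵀ.mulVec (Q.mulVec (Qᵀ.mulVec (restrictVec (Finset.univ \ Sk) η)))))) :
    Function.Injective Φk.mulVec ∧
      ∀ zstar : Fin m ⊕ {i // i ∈ Sk} → ℝ,
        (∀ z, norm2 (y - Φk.mulVec zstar) ≤ norm2 (y - Φk.mulVec z)) →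
          y - Φk.mulVec zstar =
            vk + ηk - Q.mulVec (Qᵀ.mulVec vk) - Q.mulVec (Qᵀ.mulVec ηk) :=
  stmt17_general Q hQ w₀ u₀ η S hsupp y hy Sk Mk hMk hMkInv Φk hΦk vk hvk ηk hηk
end
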